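/- arXiv:1405.7333 — 3 statements merged into one kernel-verified Lean document; each statement's English description precedes it below -/
import Mathlib

section
/- Let a, b ∈ ℝ with a ≥ |b| and a > -b, and let η be a Borel probability measure on [0,∞) with ∫₀^∞ e^{ντ} dη(τ) < ∞ for some ν > 0. Then the characteristic equation λ + a + b ∫₀^∞ e^{-λτ} dη(τ) = 0 has no complex root λ with positive real part. -/
/-!
For `Re λ > 0` and `τ ≥ 0` we have `|e^{-λτ}| ≤ 1`, so the Laplace transform of the probability
measure `η` lies in the closed unit disc. Hence `Re D(λ) ≥ Re λ + a - |b| > 0`.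
-/

open MeasureTheory

lemma ae_nonneg_of_measure_Iio_eq_zero {η : Measure ℝ} (h : η (Set.Iio 0) = 0) :
    ∀ᵐ τ ∂η, 0 ≤ τ :=
  ae_iff.2 (by simp only [not_le]; exact h)

lemma Complex.norm_exp_neg_mul_ofReal_le_one {z : ℂ} (hz : 0 ≤ z.re) {τ : ℝ} (hτ : 0 ≤ τ) :
    ‖Complex.exp (-z * τ)‖ ≤ 1 := by
  rw [Complex.norm_exp, Real.exp_le_one_iff]
  simpa [Complex.mul_re] using mul_nonneg hz hτ

lemma norm_integral_exp_neg_mul_le_one {η : Measure ℝ} [IsProbabilityMeasure η]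
    (hη : ∀ᵐ τ ∂η, 0 ≤ τ) {z : ℂ} (hz : 0 ≤ z.re) :
    ‖∫ τ, Complex.exp (-z * τ) ∂η‖ ≤ 1 := by
  simpa using norm_integral_le_of_norm_le_const
    (hη.mono fun τ hτ => Complex.norm_exp_neg_mul_ofReal_le_one hz hτ)

lemma add_add_mul_ne_zero_of_abs_le {a b : ℝ} (hab : |b| ≤ a) {w : ℂ} (hw : ‖w‖ ≤ 1)
    {z : ℂ} (hz : 0 < z.re) : z + a + b * w ≠ 0 := by
  intro h
  have hre : z.re + a + b * w.re = 0 := by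
    simpa [Complex.add_re, Complex.mul_re] using congrArg Complex.re h
  have hbw : |b * w.re| ≤ a :=
    calc |b * w.re| = |b| * |w.re| := abs_mul b w.re
      _ ≤ |b| * 1 := by gcongr; exact (Complex.abs_re_le_norm w).trans hw
      _ ≤ a := by rwa [mul_one]
  linarith [neg_le_of_abs_le hbw]

theorem stmt5_general (a b : ℝ) (ha : |b| ≤ a)
    (η : Measure ℝ) [IsProbabilityMeasure η]
    (hsupp : η (Set.Iio 0) = 0) :
    ¬ ∃ z : ℂ, 0 < z.re ∧
      z + (a : ℂ) + (b : ℂ) * (∫ τ, Complex.exp (-z * τ) ∂η) = 0 := by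
  rintro ⟨z, hz, hroot⟩
  have hI := norm_integral_exp_neg_mul_le_one (ae_nonneg_of_measure_Iio_eq_zero hsupp) hz.le
  exact add_add_mul_ne_zero_of_abs_le ha hI hz hroot

/-- Paper statement (ii) after Theorem 2.5: when `a ≥ |b|` and `a > -b` the
characteristic equation has no root with positive real part. -/
theorem stmt5 (a b : ℝ) (ha : |b| ≤ a) (hab : -b < a)
    (η : Measure ℝ) [IsProbabilityMeasure η]
    (hsupp : η (Set.Iio 0) = 0)
    (hν : ∃ ν > 0, Integrable (fun τ => Real.exp (ν * τ)) η) :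
    ¬ ∃ z : ℂ, 0 < z.re ∧
      z + (a : ℂ) + (b : ℂ) * (∫ τ, Complex.exp (-z * τ) ∂η) = 0 :=
  stmt5_general a b ha η hsupp
end

section
/- Let a ∈ (-1,1) and let η be a Borel probability measure on [0,∞) with ∫₀^∞ e^{ντ} dη(τ) < ∞ for some ν > 0. Set ω_c = √(1-a²). If either (i) C(ω) > -a for all ω ∈ [0, ω_c], or (ii) for every ω ∈ (0, ω_c] with C(ω) = -a one has S(ω) < ω, then every complex root of the characteristic equation λ + a + ∫₀^∞ e^{-λτ} dη(τ) = 0 has negative real part. -/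
open MeasureTheory

/-!
Scale all delays by a homotopy parameter `s ∈ [0, 1]`. For `s = 0` the only root is `-(1 + a) < 0`.
The exponential moment makes `w ↦ ∫ e^{-wτ} dη(τ)` holomorphic on a neighbourhood of the closed
right half-plane, where it is bounded by `1`; hence roots there have modulus at most `2`, and by
compactness "all roots lie in the open left half-plane" is an open condition on `s`. Its failure
is open too (Hurwitz: minimum modulus principle around an isolated root), as long as no root lies
on the imaginary axis. A root `iω`, `ω ≥ 0`, of the scaled equation forces `C(sω) = -a`,
`S(sω) = ω` and, since `C² + S² ≤ 1`, `sω ≤ ω ≤ ω_c`, which (i) and (ii) exclude.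
Connectedness of `[0, 1]` gives the claim at `s = 1`.
-/

open Complex ComplexConjugate Metric Set Filter Topology ProbabilityTheory

theorem exists_zero_of_norm_sub_lt_of_ne_zero_on_sphere {f : ℂ → ℂ} {z₀ : ℂ} {r : ℝ}
    (hr : 0 < r) (hf : ContinuousOn f (sphere z₀ r)) (hf₀ : f z₀ = 0)
    (hfr : ∀ z ∈ sphere z₀ r, f z ≠ 0) :
    ∃ m > 0, ∀ g : ℂ → ℂ, DifferentiableOn ℂ g (closedBall z₀ r) →
      (∀ z ∈ closedBall z₀ r, ‖g z - f z‖ < m) → ∃ z ∈ closedBall z₀ r, g z = 0 := by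
  obtain ⟨w, hw, hmin⟩ := (isCompact_sphere z₀ r).exists_isMinOn
    (NormedSpace.sphere_nonempty.2 hr.le) hf.norm
  have hm : 0 < ‖f w‖ / 2 := half_pos (norm_pos_iff.2 (hfr w hw))
  refine ⟨‖f w‖ / 2, hm, fun g hg hgf => ?_⟩
  by_contra! hg₀
  have hg_sphere : ∀ z ∈ sphere z₀ r, ‖f w‖ / 2 ≤ ‖g z‖ := fun z hz => by
    have hfz : ‖f w‖ ≤ ‖f z‖ := hmin hz
    have hgz := hgf z (sphere_subset_closedBall hz)
    have := norm_sub_norm_le (f z) (g z)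
    rw [norm_sub_rev] at this
    linarith
  -- the minimum modulus principle for `g`, i.e. the maximum modulus principle for `g⁻¹`
  have hinv : ‖(g z₀)⁻¹‖ ≤ (‖f w‖ / 2)⁻¹ := by
    refine Complex.norm_le_of_forall_mem_frontier_norm_le (f := fun z => (g z)⁻¹)
      isBounded_ball ?_ ?_ (subset_closure (mem_ball_self hr))
    · rw [← closure_ball z₀ hr.ne'] at hg hg₀
      exact (hg.inv hg₀).diffContOnCl
    · rw [frontier_ball z₀ hr.ne']
      intro z hz
      rw [norm_inv]
      exact inv_anti₀ hm (hg_sphere z hz)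
  have hgz₀ := hgf z₀ (mem_closedBall_self hr.le)
  rw [hf₀, sub_zero] at hgz₀
  rw [norm_inv, inv_le_inv₀ (norm_pos_iff.2 (hg₀ z₀ (mem_closedBall_self hr.le))) hm] at hinv
  linarith

theorem exists_sphere_ne_zero_of_eventually_ne_zero {f : ℂ → ℂ} {z₀ : ℂ}
    (hf : ∀ᶠ z in 𝓝[≠] z₀, f z ≠ 0) {ρ : ℝ} (hρ : 0 < ρ) :
    ∃ r ∈ Ioo 0 ρ, ∀ z ∈ sphere z₀ r, f z ≠ 0 := by
  obtain ⟨ε, hε, hball⟩ := Metric.eventually_nhds_iff.1 (eventually_nhdsWithin_iff.1 hf)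
  refine ⟨min (ε / 2) (ρ / 2), ⟨by positivity, by linarith [min_le_right (ε / 2) (ρ / 2)]⟩,
    fun z hz => hball ?_ ?_⟩
  · rw [mem_sphere] at hz
    rw [hz]
    linarith [min_le_left (ε / 2) (ρ / 2)]
  · exact ne_of_mem_sphere hz (by positivity)

theorem re_neg_ofReal_mul_nonpos {s : ℝ} {z : ℂ} (hs : 0 ≤ s) (hz : 0 ≤ z.re) :
    (-(s * z)).re ≤ 0 := by
  simpa using mul_nonneg hs hz

theorem closedBall_subset_re_nonneg {z₀ : ℂ} {r : ℝ} (hr : r < z₀.re) :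
    closedBall z₀ r ⊆ {z | 0 ≤ z.re} := fun z hz => by
  show 0 ≤ z.re
  have h := (abs_re_le_norm (z - z₀)).trans (mem_closedBall_iff_norm.1 hz)
  rw [sub_re] at h
  linarith [neg_abs_le (z.re - z₀.re)]

section

variable {a : ℝ} {η : Measure ℝ}

theorem complexMGF_conj {Ω : Type*} [MeasurableSpace Ω] (X : Ω → ℝ) (μ : Measure Ω) (w : ℂ) :
    complexMGF X μ (conj w) = conj (complexMGF X μ w) := by
  simp only [complexMGF, ← integral_conj, ← exp_conj, map_mul, conj_ofReal]

theorem charFun_eq_integral_cos_add_integral_sin_mul_I [IsFiniteMeasure η] (u : ℝ) :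
    charFun η u = ∫ τ, Real.cos (u * τ) ∂η + (∫ τ, Real.sin (u * τ) ∂η) * I := by
  have hcos : Integrable (fun τ => Real.cos (u * τ)) η :=
    .of_bound (by fun_prop) 1 (ae_of_all _ fun τ => by simpa using Real.abs_cos_le_one _)
  have hsin : Integrable (fun τ => Real.sin (u * τ)) η :=
    .of_bound (by fun_prop) 1 (ae_of_all _ fun τ => by simpa using Real.abs_sin_le_one _)
  have hexp : ∀ τ : ℝ, cexp (u * τ * I) = Real.cos (u * τ) + Real.sin (u * τ) * I := fun τ => by
    rw [exp_mul_I, ← ofReal_mul, ← ofReal_cos, ← ofReal_sin]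
  simp_rw [charFun_apply_real, hexp]
  rw [integral_add (by exact hcos.ofReal) (by exact hsin.ofReal.mul_const I),
    integral_mul_const, integral_complex_ofReal, integral_complex_ofReal]

theorem Iic_subset_integrableExpSet_id (hη : ∀ᵐ τ ∂η, 0 ≤ τ) {ν : ℝ}
    (hν : Integrable (fun τ => Real.exp (ν * τ)) η) : Iic ν ⊆ integrableExpSet id η := by
  intro t ht
  refine hν.mono' (by fun_prop) ?_
  filter_upwards [hη] with τ hτ
  rw [Real.norm_eq_abs, Real.abs_exp]
  exact Real.exp_le_exp.2 (mul_le_mul_of_nonneg_right ht hτ)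

theorem analyticOnNhd_complexMGF_id (hη : ∀ᵐ τ ∂η, 0 ≤ τ) {ν : ℝ} (hν₀ : 0 < ν)
    (hν : Integrable (fun τ => Real.exp (ν * τ)) η) :
    AnalyticOnNhd ℂ (complexMGF id η) {w | w.re ≤ 0} := by
  refine analyticOnNhd_complexMGF.mono fun w (hw : w.re ≤ 0) => ?_
  refine interior_mono (Iic_subset_integrableExpSet_id hη hν) ?_
  rw [interior_Iic]
  exact hw.trans_lt hν₀

theorem norm_complexMGF_id_le_one [IsProbabilityMeasure η] (hη : ∀ᵐ τ ∂η, 0 ≤ τ) {w : ℂ}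
    (hw : w.re ≤ 0) : ‖complexMGF id η w‖ ≤ 1 := by
  refine norm_complexMGF_le_mgf.trans ?_
  calc mgf id η w.re ≤ ∫ _, 1 ∂η := by
        refine integral_mono_of_nonneg (ae_of_all _ fun τ => (Real.exp_pos _).le)
          (integrable_const 1) ?_
        filter_upwards [hη] with τ hτ
        exact Real.exp_le_one_iff.2 (mul_nonpos_of_nonpos_of_nonneg hw hτ)
    _ = 1 := by simp

-- the characteristic function `z + a + ∫ e^{-z sτ} dη(τ)` of the equation with delays `sτ`
noncomputable def scaledCharFun (a : ℝ) (η : Measure ℝ) (s : ℝ) (z : ℂ) : ℂ :=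
  z + a + complexMGF id η (-(s * z))

def StabilityCondition (a : ℝ) (η : Measure ℝ) : Prop :=
  (∀ ω ∈ Icc (0 : ℝ) (Real.sqrt (1 - a ^ 2)), (∫ τ, Real.cos (ω * τ) ∂η) > -a) ∨
    (∀ ω ∈ Ioc (0 : ℝ) (Real.sqrt (1 - a ^ 2)),
      (∫ τ, Real.cos (ω * τ) ∂η) = -a → (∫ τ, Real.sin (ω * τ) ∂η) < ω)

def AllRootsInLeftHalfPlane (a : ℝ) (η : Measure ℝ) (s : ℝ) : Prop :=
  ∀ z : ℂ, scaledCharFun a η s z = 0 → z.re < 0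

theorem scaledCharFun_one (z : ℂ) :
    scaledCharFun a η 1 z = z + a + ∫ τ, cexp (-z * τ) ∂η := by
  simp [scaledCharFun, complexMGF]

theorem scaledCharFun_zero [IsProbabilityMeasure η] (z : ℂ) :
    scaledCharFun a η 0 z = z + a + 1 := by
  simp [scaledCharFun, complexMGF]

theorem scaledCharFun_conj (s : ℝ) (z : ℂ) :
    scaledCharFun a η s (conj z) = conj (scaledCharFun a η s z) := by
  simp [scaledCharFun, ← complexMGF_conj]

theorem scaledCharFun_ofReal_mul_I [IsFiniteMeasure η] (s ω : ℝ) :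
    scaledCharFun a η s (ω * I) =
      (a + ∫ τ, Real.cos (s * ω * τ) ∂η) + (ω - ∫ τ, Real.sin (s * ω * τ) ∂η) * I := by
  have : -(s * (ω * I)) = ((-(s * ω) : ℝ) : ℂ) * I := by push_cast; ring
  rw [scaledCharFun, this, complexMGF_id_mul_I, charFun_neg,
    charFun_eq_integral_cos_add_integral_sin_mul_I]
  simp only [map_add, map_mul, conj_ofReal, conj_I]
  ring

theorem norm_le_two_of_scaledCharFun_eq_zero [IsProbabilityMeasure η] (hη : ∀ᵐ τ ∂η, 0 ≤ τ)
    (ha : |a| ≤ 1) {s : ℝ} {z : ℂ} (hs : 0 ≤ s) (hz : 0 ≤ z.re)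
    (h : scaledCharFun a η s z = 0) : ‖z‖ ≤ 2 := by
  rw [scaledCharFun] at h
  calc ‖z‖ = ‖(a : ℂ) + complexMGF id η (-(s * z))‖ := by
        rw [← norm_neg]
        congr 1
        linear_combination -h
    _ ≤ ‖(a : ℂ)‖ + ‖complexMGF id η (-(s * z))‖ := norm_add_le _ _
    _ ≤ 1 + 1 := by
        gcongr
        · rwa [norm_real, Real.norm_eq_abs]
        · exact norm_complexMGF_id_le_one hη (re_neg_ofReal_mul_nonpos hs hz)
    _ = 2 := by norm_num

theorem continuousOn_uncurry_scaledCharFun (hη : ∀ᵐ τ ∂η, 0 ≤ τ) {ν : ℝ} (hν₀ : 0 < ν)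
    (hν : Integrable (fun τ => Real.exp (ν * τ)) η) :
    ContinuousOn (Function.uncurry (scaledCharFun a η)) (Ici 0 ×ˢ {z | 0 ≤ z.re}) := by
  refine (continuous_snd.add continuous_const).continuousOn.add
    ((analyticOnNhd_complexMGF_id hη hν₀ hν).continuousOn.comp (by fun_prop) ?_)
  rintro ⟨s, z⟩ ⟨hs, hz⟩
  exact re_neg_ofReal_mul_nonpos hs hz

theorem analyticOnNhd_scaledCharFun (hη : ∀ᵐ τ ∂η, 0 ≤ τ) {ν : ℝ} (hν₀ : 0 < ν)
    (hν : Integrable (fun τ => Real.exp (ν * τ)) η) {s : ℝ} (hs : 0 ≤ s) :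
    AnalyticOnNhd ℂ (scaledCharFun a η s) {z | 0 ≤ z.re} := fun z hz =>
  (analyticAt_id.add analyticAt_const).add <|
    (analyticOnNhd_complexMGF_id hη hν₀ hν _ (re_neg_ofReal_mul_nonpos hs hz)).comp
      (f := fun z : ℂ => -(s * z)) (by fun_prop)

theorem eventually_forall_norm_scaledCharFun_sub_lt (hη : ∀ᵐ τ ∂η, 0 ≤ τ) {ν : ℝ} (hν₀ : 0 < ν)
    (hν : Integrable (fun τ => Real.exp (ν * τ)) η) {K : Set ℂ} (hK : IsCompact K)
    (hKre : K ⊆ {z | 0 ≤ z.re}) {s : ℝ} (hs : 0 ≤ s) {m : ℝ} (hm : 0 < m) :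
    ∀ᶠ s' in 𝓝[Ici 0] s, ∀ z ∈ K, ‖scaledCharFun a η s' z - scaledCharFun a η s z‖ < m := by
  obtain ⟨v, hv, hvK⟩ := hK.mem_uniformity_of_prod
    ((continuousOn_uncurry_scaledCharFun hη hν₀ hν).mono (prod_mono subset_rfl hKre))
    (mem_Ici.2 hs) (dist_mem_uniformity hm)
  filter_upwards [hv] with s' hs' z hz
  rw [← dist_eq_norm]
  exact hvK s' hs' z hz

theorem scaledCharFun_eventually_ne_zero [IsProbabilityMeasure η] (hη : ∀ᵐ τ ∂η, 0 ≤ τ)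
    {ν : ℝ} (hν₀ : 0 < ν) (hν : Integrable (fun τ => Real.exp (ν * τ)) η) (ha : |a| ≤ 1)
    {s : ℝ} (hs : 0 ≤ s) {z₀ : ℂ} (hz₀ : 0 ≤ z₀.re) :
    ∀ᶠ z in 𝓝[≠] z₀, scaledCharFun a η s z ≠ 0 := by
  have hD := analyticOnNhd_scaledCharFun (a := a) hη hν₀ hν hs
  refine (hD z₀ hz₀).eventually_eq_zero_or_eventually_ne_zero.resolve_left fun hzero => ?_
  -- by the identity theorem the function would vanish at `3`, outside the disc of possible roots
  have h₃ : scaledCharFun a η s 3 = 0 := hD.eqOn_zero_of_preconnected_of_eventuallyEq_zero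
    (convex_halfSpace_re_ge 0).isPreconnected hz₀ hzero (show (0 : ℝ) ≤ (3 : ℂ).re by norm_num)
  have := norm_le_two_of_scaledCharFun_eq_zero hη ha hs (by norm_num) h₃
  norm_num at this

theorem allRootsInLeftHalfPlane_zero [IsProbabilityMeasure η] (ha : -1 < a) :
    AllRootsInLeftHalfPlane a η 0 := by
  intro z hz
  have := congrArg re hz
  simp only [scaledCharFun_zero, add_re, ofReal_re, one_re, zero_re] at this
  linarith

theorem eventually_allRootsInLeftHalfPlane [IsProbabilityMeasure η] (hη : ∀ᵐ τ ∂η, 0 ≤ τ)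
    {ν : ℝ} (hν₀ : 0 < ν) (hν : Integrable (fun τ => Real.exp (ν * τ)) η) (ha : |a| ≤ 1)
    {s : ℝ} (hs : 0 ≤ s) (h : AllRootsInLeftHalfPlane a η s) :
    ∀ᶠ s' in 𝓝[Ici 0] s, AllRootsInLeftHalfPlane a η s' := by
  set K := closedBall (0 : ℂ) 2 ∩ {z | 0 ≤ z.re}
  have hK : IsCompact K :=
    (isCompact_closedBall 0 2).inter_right (isClosed_le continuous_const continuous_re)
  obtain ⟨w, hw, hmin⟩ := hK.exists_isMinOn ⟨0, by simp [K]⟩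
    ((analyticOnNhd_scaledCharFun (a := a) hη hν₀ hν hs).continuousOn.mono
      inter_subset_right).norm
  have hm : 0 < ‖scaledCharFun a η s w‖ :=
    norm_pos_iff.2 fun h₀ => (h w h₀).not_ge hw.2
  filter_upwards [eventually_forall_norm_scaledCharFun_sub_lt hη hν₀ hν hK inter_subset_right hs hm,
    self_mem_nhdsWithin] with s' hs' (hs'₀ : 0 ≤ s') z hz
  by_contra! hre
  have hzK : z ∈ K :=
    ⟨mem_closedBall_zero_iff.2 (norm_le_two_of_scaledCharFun_eq_zero hη ha hs'₀ hre hz), hre⟩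
  have hlt := hs' z hzK
  rw [hz, zero_sub, norm_neg] at hlt
  exact (hmin hzK).not_gt hlt

theorem eventually_not_allRootsInLeftHalfPlane [IsProbabilityMeasure η] (hη : ∀ᵐ τ ∂η, 0 ≤ τ)
    {ν : ℝ} (hν₀ : 0 < ν) (hν : Integrable (fun τ => Real.exp (ν * τ)) η) (ha : |a| ≤ 1)
    {s : ℝ} (hs : 0 ≤ s) (himag : ∀ ω : ℝ, scaledCharFun a η s (ω * I) ≠ 0)
    (h : ¬AllRootsInLeftHalfPlane a η s) :
    ∀ᶠ s' in 𝓝[Ici 0] s, ¬AllRootsInLeftHalfPlane a η s' := by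
  obtain ⟨z₀, hz₀, hre⟩ : ∃ z₀, scaledCharFun a η s z₀ = 0 ∧ 0 ≤ z₀.re := by
    simpa [AllRootsInLeftHalfPlane] using h
  have hre' : 0 < z₀.re := hre.lt_of_ne fun h₀ => himag z₀.im <| by
    rwa [show (z₀.im : ℂ) * I = z₀ from ext (by simp [h₀.symm]) (by simp)]
  obtain ⟨r, ⟨hr, hrz⟩, hsphere⟩ := exists_sphere_ne_zero_of_eventually_ne_zero
    (scaledCharFun_eventually_ne_zero hη hν₀ hν ha hs hre) hre'
  have hball := closedBall_subset_re_nonneg hrz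
  have hD {s'} (hs' : 0 ≤ s') := analyticOnNhd_scaledCharFun (a := a) hη hν₀ hν hs'
  obtain ⟨m, hm, hroot⟩ := exists_zero_of_norm_sub_lt_of_ne_zero_on_sphere hr
    ((hD hs).continuousOn.mono (sphere_subset_closedBall.trans hball)) hz₀ hsphere
  filter_upwards [eventually_forall_norm_scaledCharFun_sub_lt hη hν₀ hν (isCompact_closedBall z₀ r)
    hball hs hm, self_mem_nhdsWithin] with s' hs' (hs'₀ : 0 ≤ s') hstable
  obtain ⟨z, hz, hz₀'⟩ := hroot _ ((hD hs'₀).differentiableOn.mono hball) hs'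
  exact (hstable z hz₀').not_ge (hball hz)

theorem false_of_integral_cos_eq_of_integral_sin_eq [IsProbabilityMeasure η] (ha : -1 < a)
    (hcond : StabilityCondition a η)
    {u ω : ℝ} (hu : u ∈ Icc 0 (Real.sqrt (1 - a ^ 2))) (huω : u ≤ ω)
    (hC : ∫ τ, Real.cos (u * τ) ∂η = -a) (hS : ∫ τ, Real.sin (u * τ) ∂η = ω) : False := by
  rcases hcond with h | h
  · exact (h u hu).ne' hC
  · rcases hu.1.eq_or_lt with rfl | hu₀
    · linarith [show ∫ τ, Real.cos (0 * τ) ∂η = 1 by simp]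
    · linarith [h u ⟨hu₀, hu.2⟩ hC]

theorem scaledCharFun_ofReal_mul_I_ne_zero [IsProbabilityMeasure η] (ha : -1 < a)
    (hcond : StabilityCondition a η) {s : ℝ} (hs : s ∈ Icc (0 : ℝ) 1) (ω : ℝ) : scaledCharFun a η s (ω * I) ≠ 0 := by
  wlog hω : 0 ≤ ω generalizing ω
  · intro h₀
    refine this (-ω) (by linarith) ?_
    rw [show ((-ω : ℝ) : ℂ) * I = conj (ω * I) by simp, scaledCharFun_conj, h₀, map_zero]
  intro h₀
  rw [scaledCharFun_ofReal_mul_I] at h₀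
  have hC : ∫ τ, Real.cos (s * ω * τ) ∂η = -a := by
    linarith [show a + ∫ τ, Real.cos (s * ω * τ) ∂η = 0 by simpa using congrArg re h₀]
  have hS : ∫ τ, Real.sin (s * ω * τ) ∂η = ω := by
    linarith [show ω - ∫ τ, Real.sin (s * ω * τ) ∂η = 0 by simpa using congrArg im h₀]
  -- `C² + S² = ‖∫ e^{isωτ} dη(τ)‖² ≤ 1` bounds the frequency of an imaginary root by `ω_c`
  have hωc : ω ≤ Real.sqrt (1 - a ^ 2) := by
    have hnorm := norm_charFun_le_one (μ := η) (s * ω)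
    rw [charFun_eq_integral_cos_add_integral_sin_mul_I, hC, hS, ← sq_le_one_iff₀ (norm_nonneg _),
      Complex.sq_norm, normSq_add_mul_I] at hnorm
    exact Real.le_sqrt_of_sq_le (by linarith)
  have hsω : s * ω ≤ ω := mul_le_of_le_one_left hω hs.2
  exact false_of_integral_cos_eq_of_integral_sin_eq ha hcond
    ⟨mul_nonneg hs.1 hω, hsω.trans hωc⟩ hsω hC hS

end

/-- Paper Corollary 3.2: sufficient conditions for asymptotic stability. -/
theorem stmt7 (a : ℝ) (ha : a ∈ Set.Ioo (-1 : ℝ) 1)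
    (η : Measure ℝ) [IsProbabilityMeasure η]
    (hsupp : η (Set.Iio 0) = 0)
    (hν : ∃ ν > 0, Integrable (fun τ => Real.exp (ν * τ)) η)
    (hcond :
      (∀ ω ∈ Set.Icc (0 : ℝ) (Real.sqrt (1 - a ^ 2)),
          (∫ τ, Real.cos (ω * τ) ∂η) > -a) ∨
      (∀ ω ∈ Set.Ioc (0 : ℝ) (Real.sqrt (1 - a ^ 2)),
          (∫ τ, Real.cos (ω * τ) ∂η) = -a → (∫ τ, Real.sin (ω * τ) ∂η) < ω)) :
    ∀ z : ℂ, z + (a : ℂ) + (∫ τ, Complex.exp (-z * τ) ∂η) = 0 → z.re < 0 := by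
  obtain ⟨ν, hν₀, hν⟩ := hν
  have hη : ∀ᵐ τ ∂η, 0 ≤ τ := by
    rw [ae_iff]
    simpa only [not_le, Iio_def] using hsupp
  have ha' : |a| ≤ 1 := abs_le.2 ⟨ha.1.le, ha.2.le⟩
  have hlocal : ∀ s ∈ Icc (0 : ℝ) 1, ∀ᶠ t in 𝓝[Icc 0 1] s,
      (AllRootsInLeftHalfPlane a η s ↔ AllRootsInLeftHalfPlane a η t) := fun s hs => by
    refine nhdsWithin_mono _ Icc_subset_Ici_self ?_
    by_cases h : AllRootsInLeftHalfPlane a η s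
    · filter_upwards [eventually_allRootsInLeftHalfPlane hη hν₀ hν ha' hs.1 h] with t ht
      exact iff_of_true h ht
    · filter_upwards [eventually_not_allRootsInLeftHalfPlane hη hν₀ hν ha' hs.1
        (scaledCharFun_ofReal_mul_I_ne_zero ha.1 hcond hs) h] with t ht
      exact iff_of_false h ht
  have hstable : AllRootsInLeftHalfPlane a η 1 :=
    (isPreconnected_Icc.induction₂' _ (fun s hs => (hlocal s hs).mono fun _ h => ⟨h, h.symm⟩)
      (fun _ _ _ _ _ _ => Iff.trans) (left_mem_Icc.2 zero_le_one)
      (right_mem_Icc.2 zero_le_one)).1 (allRootsInLeftHalfPlane_zero ha.1)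
  exact fun z hz => hstable z (by rwa [scaledCharFun_one])
end

section
/- Let c ≈ 0.7246 and θ_c ≈ 2.3311 be defined by: θ_c is the unique θ ∈ (0,π) with 1 - θ·sin(θ) = cos(θ), and c = sin(θ_c). Let a ∈ (-1,1) and E > 0 with E < arccos(-a)/ω_c, where ω_c = √(1-a²). Suppose ω_s ∈ [0, ω_c], and suppose there exist τ₁, τ₂ ≥ 0 and p₁, p₂ > 0 with p₁ + p₂ = 1, p₁τ₁ + p₂τ₂ = E, and p₁cos(ω_s τ₁) + p₂cos(ω_s τ₂) = -a. Then there exists a unique pair (p*, τ₂*) with p* ∈ (0,1), τ₂* > 0, 0 < ω_s τ₂* ≤ θ_c, p*·τ₂* = E, and (1 - p*) + p*·cos(ω_s τ₂*) = -a (i.e., a unique two-delay density f* with delays τ₁* = 0 and τ₂*, weights 1-p* and p*, mean E, satisfying C*(ω_s) = -a). -/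
/-!
Put `S = E * ωs` and `u θ = (1 - cos θ) / θ`. The substitution `p = S / θ`, `τ = θ / ωs` turns the
conditions on `(p, τ)` into `u θ = (1 + a) / S` with `θ = ωs * τ ∈ (S, θc]`. Since
`u' θ = -(1 - cos θ - θ sin θ) / θ²` and `1 - cos θ - θ sin θ < 0` on `(0, θc)`, `u` is strictly
increasing on `(0, θc]`, which gives uniqueness; existence follows from the intermediate value
theorem once `u S < (1 + a) / S ≤ u θc = sin θc` and `S < θc`.

The bound `E * ωc < arccos (-a)` gives `-a < cos S`. The other two inequalities come from the
given two-delay density: for `s ∈ [π/2, π]` with `cos s + s sin s ≤ 1` the tangent line of `cos` at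
`s` lies below `cos` on `[0, ∞)`, so averaging over the delays `ωs τᵢ` gives
`-a ≥ cos s - sin s * (S - s)`. Taking `s = θc` yields `1 + a ≤ sin θc * S`, and `s = S ≥ θc`
would yield `cos S ≤ -a`.
-/

open Real Set

theorem hasDerivAt_one_sub_cos_sub_mul_sin (x : ℝ) :
    HasDerivAt (fun t => 1 - cos t - t * sin t) (-(x * cos x)) x :=
  (((hasDerivAt_const x 1).sub (hasDerivAt_cos x)).sub
    ((hasDerivAt_id' x).mul (hasDerivAt_sin x))).congr_deriv (by ring)

theorem hasDerivAt_cos_add_mul (k x : ℝ) :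
    HasDerivAt (fun t => cos t + k * t) (k - sin x) x :=
  ((hasDerivAt_cos x).add ((hasDerivAt_id' x).const_mul k)).congr_deriv (by ring)

theorem hasDerivAt_one_sub_cos_div {x : ℝ} (hx : x ≠ 0) :
    HasDerivAt (fun t => (1 - cos t) / t) (-(1 - cos x - x * sin x) / x ^ 2) x :=
  (((hasDerivAt_const x 1).sub (hasDerivAt_cos x)).div (hasDerivAt_id' x) hx).congr_deriv
    (by simp only [Pi.sub_apply]; ring)

theorem cos_sub_sin_mul_sub_le_cos_of_le_pi {s θ : ℝ} (hs : s ∈ Icc (π / 2) π)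
    (h0 : cos s + s * sin s ≤ 1) (hθ : θ ∈ Icc 0 π) : cos s - sin s * (θ - s) ≤ cos θ := by
  obtain ⟨hs₁, hs₂⟩ := hs
  have hπ := pi_pos
  set g : ℝ → ℝ := fun t => cos t + sin s * t
  suffices g s ≤ g θ by simp only [g] at this; linarith
  have hdiff : Differentiable ℝ g := fun x => (hasDerivAt_cos_add_mul _ x).differentiableAt
  have hderiv (x : ℝ) : deriv g x = sin s - sin x := (hasDerivAt_cos_add_mul _ x).deriv
  have up₁ : MonotoneOn g (Icc 0 (π - s)) := by
    refine monotoneOn_of_deriv_nonneg (convex_Icc _ _) hdiff.continuous.continuousOn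
      hdiff.differentiableOn fun x hx => ?_
    rw [interior_Icc] at hx
    have : sin x ≤ sin (π - s) :=
      sin_le_sin_of_le_of_le_pi_div_two (by linarith [hx.1]) (by linarith) hx.2.le
    rw [sin_pi_sub] at this
    linarith [hderiv x]
  have down : AntitoneOn g (Icc (π - s) s) := by
    refine antitoneOn_of_deriv_nonpos (convex_Icc _ _) hdiff.continuous.continuousOn
      hdiff.differentiableOn fun x hx => ?_
    rw [interior_Icc] at hx
    have := strictConcaveOn_sin_Icc.concaveOn.ge_on_segment
      (⟨by linarith, by linarith⟩ : π - s ∈ Icc 0 π) (⟨by linarith, hs₂⟩ : s ∈ Icc 0 π)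
      (by rw [segment_eq_Icc (by linarith)]; exact Ioo_subset_Icc_self hx)
    rw [sin_pi_sub, min_self] at this
    linarith [hderiv x]
  have up₂ : MonotoneOn g (Icc s π) := by
    refine monotoneOn_of_deriv_nonneg (convex_Icc _ _) hdiff.continuous.continuousOn
      hdiff.differentiableOn fun x hx => ?_
    rw [interior_Icc] at hx
    have : sin (π - x) ≤ sin (π - s) :=
      sin_le_sin_of_le_of_le_pi_div_two (by linarith [hx.2]) (by linarith) (by linarith [hx.1])
    rw [sin_pi_sub, sin_pi_sub] at this
    linarith [hderiv x]
  have hg0 : g s ≤ g 0 := by simp only [g, cos_zero, mul_zero, add_zero]; linarith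
  rcases le_total θ (π - s) with h₁ | h₁
  · exact hg0.trans (up₁ ⟨le_rfl, by linarith⟩ ⟨hθ.1, h₁⟩ hθ.1)
  rcases le_total θ s with h₂ | h₂
  · exact down ⟨h₁, h₂⟩ ⟨by linarith, le_rfl⟩ h₂
  · exact up₂ ⟨le_rfl, hs₂⟩ ⟨h₂, hθ.2⟩ h₂

theorem cos_sub_sin_mul_sub_le_cos {s θ : ℝ} (hs : s ∈ Icc (π / 2) π)
    (h0 : cos s + s * sin s ≤ 1) (hθ : 0 ≤ θ) : cos s - sin s * (θ - s) ≤ cos θ := by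
  rcases le_total θ π with hθπ | hπθ
  · exact cos_sub_sin_mul_sub_le_cos_of_le_pi hs h0 ⟨hθ, hθπ⟩
  have hπ := cos_sub_sin_mul_sub_le_cos_of_le_pi hs h0 ⟨pi_pos.le, le_rfl⟩
  have hsin : 0 ≤ sin s := sin_nonneg_of_nonneg_of_le_pi (by linarith [hs.1, pi_pos]) hs.2
  rw [cos_pi] at hπ
  nlinarith [neg_one_le_cos θ]

theorem cos_sub_sin_mul_sub_le_two_point {s x₁ x₂ p₁ p₂ : ℝ} (hs : s ∈ Icc (π / 2) π)
    (h0 : cos s + s * sin s ≤ 1) (hx₁ : 0 ≤ x₁) (hx₂ : 0 ≤ x₂) (hp₁ : 0 ≤ p₁) (hp₂ : 0 ≤ p₂)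
    (hp : p₁ + p₂ = 1) :
    cos s - sin s * (p₁ * x₁ + p₂ * x₂ - s) ≤ p₁ * cos x₁ + p₂ * cos x₂ := by
  have h₁ := mul_le_mul_of_nonneg_left (cos_sub_sin_mul_sub_le_cos hs h0 hx₁) hp₁
  have h₂ := mul_le_mul_of_nonneg_left (cos_sub_sin_mul_sub_le_cos hs h0 hx₂) hp₂
  linear_combination h₁ + h₂ - (cos s + s * sin s) * hp

theorem strictAntiOn_one_sub_cos_sub_mul_sin :
    StrictAntiOn (fun t => 1 - cos t - t * sin t) (Icc 0 (π / 2)) := by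
  refine strictAntiOn_of_deriv_neg (convex_Icc _ _) (by fun_prop) fun x hx => ?_
  rw [interior_Icc] at hx
  rw [(hasDerivAt_one_sub_cos_sub_mul_sin x).deriv, neg_lt_zero]
  exact mul_pos hx.1 (cos_pos_of_mem_Ioo ⟨by linarith [hx.1, pi_pos], hx.2⟩)

theorem strictMonoOn_one_sub_cos_sub_mul_sin :
    StrictMonoOn (fun t => 1 - cos t - t * sin t) (Icc (π / 2) π) := by
  refine strictMonoOn_of_deriv_pos (convex_Icc _ _) (by fun_prop) fun x hx => ?_
  rw [interior_Icc] at hx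
  rw [(hasDerivAt_one_sub_cos_sub_mul_sin x).deriv, neg_pos]
  exact mul_neg_of_pos_of_neg (by linarith [hx.1, pi_pos])
    (cos_neg_of_pi_div_two_lt_of_lt hx.1 (by linarith [hx.2, pi_pos]))

theorem one_sub_add_mul_cos_eq_iff {a E ω p τ : ℝ} (hω : ω ≠ 0) (hτ : τ ≠ 0) (hE : E ≠ 0)
    (hpτ : p * τ = E) :
    (1 - p) + p * cos (ω * τ) = -a ↔ (1 - cos (ω * τ)) / (ω * τ) = (1 + a) / (E * ω) := by
  rw [div_eq_div_iff (mul_ne_zero hω hτ) (mul_ne_zero hE hω), ← hpτ]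
  constructor
  · intro h; linear_combination (-(τ * ω)) * h
  · intro h
    have := mul_right_cancel₀ (mul_ne_zero hω hτ) (by linear_combination h :
      (p * (1 - cos (ω * τ))) * (ω * τ) = (1 + a) * (ω * τ))
    linear_combination -this

section Root

variable {θc : ℝ} (hθc : θc ∈ Ioo 0 π) (hroot : 1 - θc * sin θc = cos θc)
include hθc hroot

theorem pi_div_two_lt_of_root : π / 2 < θc := by
  by_contra! h
  have := strictAntiOn_one_sub_cos_sub_mul_sin ⟨le_rfl, by positivity⟩ ⟨hθc.1.le, h⟩ hθc.1
  simp only [cos_zero, sin_zero, mul_zero, sub_self] at this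
  linarith

theorem one_sub_cos_sub_mul_sin_neg_of_lt_root {θ : ℝ} (hθ : θ ∈ Ioo 0 θc) :
    1 - cos θ - θ * sin θ < 0 := by
  have hθc₂ := pi_div_two_lt_of_root hθc hroot
  rcases le_or_gt θ (π / 2) with h | h
  · have := strictAntiOn_one_sub_cos_sub_mul_sin ⟨le_rfl, by positivity⟩ ⟨hθ.1.le, h⟩ hθ.1
    simpa using this
  · have := strictMonoOn_one_sub_cos_sub_mul_sin ⟨h.le, by linarith [hθ.2, hθc.2]⟩
      ⟨hθc₂.le, hθc.2.le⟩ hθ.2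
    linarith

theorem cos_add_mul_sin_le_one_of_root_le {θ : ℝ} (hθ : θ ∈ Icc θc π) :
    cos θ + θ * sin θ ≤ 1 := by
  have hθc₂ := pi_div_two_lt_of_root hθc hroot
  have := strictMonoOn_one_sub_cos_sub_mul_sin.monotoneOn ⟨hθc₂.le, hθc.2.le⟩
    ⟨by linarith [hθ.1], hθ.2⟩ hθ.1
  linarith

theorem strictMonoOn_one_sub_cos_div : StrictMonoOn (fun t => (1 - cos t) / t) (Ioc 0 θc) := by
  refine strictMonoOn_of_deriv_pos (convex_Ioc _ _)
    (fun x hx => by fun_prop (disch := exact hx.1.ne')) fun x hx => ?_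
  rw [interior_Ioc] at hx
  rw [(hasDerivAt_one_sub_cos_div hx.1.ne').deriv]
  exact div_pos (neg_pos.2 (one_sub_cos_sub_mul_sin_neg_of_lt_root hθc hroot hx))
    (pow_pos hx.1 2)

theorem exists_mem_Ioc_one_sub_cos_div_eq {S y : ℝ} (hS : 0 < S) (hSθc : S ≤ θc)
    (hy : y ∈ Ioc ((1 - cos S) / S) (sin θc)) : ∃ θ ∈ Ioc S θc, (1 - cos θ) / θ = y := by
  have hu : (1 - cos θc) / θc = sin θc := by
    rw [div_eq_iff hθc.1.ne']
    linarith
  rw [← hu] at hy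
  exact intermediate_value_Ioc hSθc
    (fun x hx => by fun_prop (disch := exact (hS.trans_le hx.1).ne')) hy

theorem one_sub_sin_mul_le_two_point_of_root {x₁ x₂ p₁ p₂ : ℝ} (hx₁ : 0 ≤ x₁) (hx₂ : 0 ≤ x₂)
    (hp₁ : 0 ≤ p₁) (hp₂ : 0 ≤ p₂) (hp : p₁ + p₂ = 1) :
    1 - sin θc * (p₁ * x₁ + p₂ * x₂) ≤ p₁ * cos x₁ + p₂ * cos x₂ := by
  have := cos_sub_sin_mul_sub_le_two_point ⟨(pi_div_two_lt_of_root hθc hroot).le, hθc.2.le⟩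
    (by linarith) hx₁ hx₂ hp₁ hp₂ hp
  linarith

theorem cos_le_two_point_of_root_le {x₁ x₂ p₁ p₂ : ℝ} (hx₁ : 0 ≤ x₁) (hx₂ : 0 ≤ x₂)
    (hp₁ : 0 ≤ p₁) (hp₂ : 0 ≤ p₂) (hp : p₁ + p₂ = 1) (hm : p₁ * x₁ + p₂ * x₂ ∈ Icc θc π) :
    cos (p₁ * x₁ + p₂ * x₂) ≤ p₁ * cos x₁ + p₂ * cos x₂ := by
  have := cos_sub_sin_mul_sub_le_two_point
    ⟨(pi_div_two_lt_of_root hθc hroot).le.trans hm.1, hm.2⟩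
    (cos_add_mul_sin_le_one_of_root_le hθc hroot hm) hx₁ hx₂ hp₁ hp₂ hp
  rwa [sub_self, mul_zero, sub_zero] at this

theorem existsUnique_weight_delay {a E ω : ℝ} (hE : 0 < E) (hω : 0 < ω) (hEω : E * ω < θc)
    (hcos : -a < cos (E * ω)) (hsin : 1 + a ≤ sin θc * (E * ω)) :
    ∃! pt : ℝ × ℝ, pt.1 ∈ Ioo 0 1 ∧ 0 < pt.2 ∧ 0 < ω * pt.2 ∧ ω * pt.2 ≤ θc ∧
      pt.1 * pt.2 = E ∧ (1 - pt.1) + pt.1 * cos (ω * pt.2) = -a := by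
  have hS : 0 < E * ω := mul_pos hE hω
  obtain ⟨θ, ⟨hSθ, hθθc⟩, hθ⟩ := exists_mem_Ioc_one_sub_cos_div_eq hθc hroot hS hEω.le
    (y := (1 + a) / (E * ω)) ⟨div_lt_div_of_pos_right (by linarith) hS,
      div_le_of_le_mul₀ hS.le (sin_pos_of_pos_of_lt_pi hθc.1 hθc.2).le hsin⟩
  have hθ₀ : 0 < θ := hS.trans hSθ
  have hωθ : ω * (θ / ω) = θ := mul_div_cancel₀ _ hω.ne'
  refine ⟨(E * ω / θ, θ / ω), ⟨⟨div_pos hS hθ₀, (div_lt_one hθ₀).2 hSθ⟩, div_pos hθ₀ hω,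
    by dsimp only; rwa [hωθ], by dsimp only; rwa [hωθ], by field_simp, ?_⟩, ?_⟩
  · rw [one_sub_add_mul_cos_eq_iff hω.ne' (div_pos hθ₀ hω).ne' hE.ne' (by field_simp), hωθ]
    exact hθ
  · rintro ⟨p, τ⟩ ⟨-, hτ, hφ, hφθc, hpτ, hpa⟩
    rw [one_sub_add_mul_cos_eq_iff hω.ne' hτ.ne' hE.ne' hpτ] at hpa
    have hφθ : ω * τ = θ := (strictMonoOn_one_sub_cos_div hθc hroot).injOn ⟨hφ, hφθc⟩
      ⟨hθ₀, hθθc⟩ (hpa.trans hθ.symm)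
    dsimp only at hpτ
    ext
    · field_simp
      linear_combination ω * hpτ - p * hφθ
    · field_simp
      linear_combination hφθ

end Root

theorem stmt10_general (θc : ℝ)
    (hθc_mem : θc ∈ Set.Ioo 0 Real.pi)
    (hθc_eq : 1 - θc * Real.sin θc = Real.cos θc)
    (a E : ℝ) (ha : a ∈ Set.Ioo (-1 : ℝ) 1) (hE : 0 < E)
    (hEbound : E < Real.arccos (-a) / Real.sqrt (1 - a ^ 2))
    (ωs : ℝ) (hωs : ωs ∈ Set.Icc 0 (Real.sqrt (1 - a ^ 2)))
    (τ₁ τ₂ p₁ p₂ : ℝ) (hτ₁ : 0 ≤ τ₁) (hτ₂ : 0 ≤ τ₂) (hp₁ : 0 < p₁) (hp₂ : 0 < p₂)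
    (hsum : p₁ + p₂ = 1) (hmean : p₁ * τ₁ + p₂ * τ₂ = E)
    (hC : p₁ * Real.cos (ωs * τ₁) + p₂ * Real.cos (ωs * τ₂) = -a) :
    ∃! pt : ℝ × ℝ,
      pt.1 ∈ Set.Ioo (0 : ℝ) 1 ∧ 0 < pt.2 ∧
      0 < ωs * pt.2 ∧ ωs * pt.2 ≤ θc ∧
      pt.1 * pt.2 = E ∧
      (1 - pt.1) + pt.1 * Real.cos (ωs * pt.2) = -a := by
  obtain ⟨ha₁, ha₂⟩ := ha
  have hω : 0 < ωs := hωs.1.lt_of_ne fun h => by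
    simp only [← h, zero_mul, cos_zero, mul_one] at hC
    linarith
  have hEω : E * ωs < arccos (-a) := calc
    E * ωs ≤ E * √(1 - a ^ 2) := mul_le_mul_of_nonneg_left hωs.2 hE.le
    _ < arccos (-a) := (lt_div_iff₀ (sqrt_pos.2 (by nlinarith))).1 hEbound
  have hcos : -a < cos (E * ωs) := by
    simpa [cos_arccos (by linarith : -1 ≤ -a) (by linarith)] using
      cos_lt_cos_of_nonneg_of_le_pi (mul_pos hE hω).le (arccos_le_pi _) hEω
  have hx₁ : 0 ≤ ωs * τ₁ := mul_nonneg hω.le hτ₁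
  have hx₂ : 0 ≤ ωs * τ₂ := mul_nonneg hω.le hτ₂
  have hmean' : p₁ * (ωs * τ₁) + p₂ * (ωs * τ₂) = E * ωs := by rw [← hmean]; ring
  refine existsUnique_weight_delay hθc_mem hθc_eq hE hω ?_ hcos ?_
  · by_contra! h
    have := cos_le_two_point_of_root_le hθc_mem hθc_eq hx₁ hx₂ hp₁.le hp₂.le hsum
      (hmean' ▸ ⟨h, hEω.le.trans (arccos_le_pi _)⟩)
    rw [hC, hmean'] at this
    linarith
  · have := one_sub_sin_mul_le_two_point_of_root hθc_mem hθc_eq hx₁ hx₂ hp₁.le hp₂.le hsum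
    rw [hC, hmean'] at this
    linarith

/-- Paper Lemma 4.3: existence and uniqueness of the extremal two-delay density `f*`. -/
theorem stmt10 (θc c : ℝ)
    (hθc_mem : θc ∈ Set.Ioo 0 Real.pi)
    (hθc_eq : 1 - θc * Real.sin θc = Real.cos θc)
    (hθc_uniq : ∀ θ ∈ Set.Ioo 0 Real.pi, 1 - θ * Real.sin θ = Real.cos θ → θ = θc)
    (hc : c = Real.sin θc)
    (a E : ℝ) (ha : a ∈ Set.Ioo (-1 : ℝ) 1) (hE : 0 < E)
    (hEbound : E < Real.arccos (-a) / Real.sqrt (1 - a ^ 2))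
    (ωs : ℝ) (hωs : ωs ∈ Set.Icc 0 (Real.sqrt (1 - a ^ 2)))
    (τ₁ τ₂ p₁ p₂ : ℝ) (hτ₁ : 0 ≤ τ₁) (hτ₂ : 0 ≤ τ₂) (hp₁ : 0 < p₁) (hp₂ : 0 < p₂)
    (hsum : p₁ + p₂ = 1) (hmean : p₁ * τ₁ + p₂ * τ₂ = E)
    (hC : p₁ * Real.cos (ωs * τ₁) + p₂ * Real.cos (ωs * τ₂) = -a) :
    ∃! pt : ℝ × ℝ,
      pt.1 ∈ Set.Ioo (0 : ℝ) 1 ∧ 0 < pt.2 ∧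
      0 < ωs * pt.2 ∧ ωs * pt.2 ≤ θc ∧
      pt.1 * pt.2 = E ∧
      (1 - pt.1) + pt.1 * Real.cos (ωs * pt.2) = -a :=
  stmt10_general θc hθc_mem hθc_eq a E ha hE hEbound ωs hωs τ₁ τ₂ p₁ p₂ hτ₁ hτ₂ hp₁ hp₂ hsum hmean
    hC
end
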